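/- arXiv:1112.5241 — 6 statements merged into one kernel-verified Lean document; each statement's English description precedes it below -/
import Mathlib

section
/- Every integral connectivity space can be defined by a separation device: for every integral connectivity structure κ on a set E, there exists a separation device 𝒮 on E such that κ is exactly the set of subsets of E that are not separated by 𝒮. -/
/-- A connectivity structure on `E`: `∅` is connected and any family of connected
sets with nonempty intersection has connected union. -/
def IsConnectivity {E : Type*} (κ : Set (Set E)) : Prop :=
  ∅ ∈ κ ∧ ∀ ℐ ⊆ κ, (⋂₀ ℐ).Nonempty → ⋃₀ ℐ ∈ κ

/-- Integral: every singleton is connected. -/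
def IsIntegralCnct {E : Type*} (κ : Set (Set E)) : Prop :=
  ∀ x : E, {x} ∈ κ

/-- A separation device: a set of pairs of nonempty disjoint subsets of `E`. -/
def IsSeparationDevice {E : Type*} (𝒮 : Set (Set E × Set E)) : Prop :=
  ∀ p ∈ 𝒮, p.1.Nonempty ∧ p.2.Nonempty ∧ Disjoint p.1 p.2

/-- `A` is separated by the device `𝒮`. -/
def SeparatedBy {E : Type*} (𝒮 : Set (Set E × Set E)) (A : Set E) : Prop :=
  ∃ p ∈ 𝒮, A ⊆ p.1 ∪ p.2 ∧ (A ∩ p.1).Nonempty ∧ (A ∩ p.2).Nonempty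
/-- Every integral connectivity space can be defined by a separation device. -/
theorem every_integral_connectivity_space_defined_by_separation
    {E : Type*} (κ : Set (Set E)) (hκ : IsConnectivity κ) (hint : IsIntegralCnct κ) :
    ∃ 𝒮 : Set (Set E × Set E), IsSeparationDevice 𝒮 ∧
      κ = {A : Set E | ¬ SeparatedBy 𝒮 A} := by
  classical
  -- component of x in A
  set comp : Set E → E → Set E := fun A x => ⋃₀ {C | C ∈ κ ∧ C ⊆ A ∧ x ∈ C} with hcomp
  have hsub : ∀ A x, comp A x ⊆ A := by
    intro A x y hy
    rcases hy with ⟨C, ⟨_, hCA, _⟩, hyC⟩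
    exact hCA hyC
  have hmem : ∀ A (x : E), x ∈ A → x ∈ comp A x := by
    intro A x hx
    exact ⟨{x}, ⟨hint x, by simpa using hx, rfl⟩, rfl⟩
  have hconn : ∀ A (x : E), x ∈ A → comp A x ∈ κ := by
    intro A x hx
    refine hκ.2 _ (fun C hC => hC.1) ⟨x, ?_⟩
    intro C hC
    exact hC.2.2
  have hdiffne : ∀ A (x : E), A ∉ κ → x ∈ A → (A \ comp A x).Nonempty := by
    intro A x hA hx
    rw [Set.nonempty_iff_ne_empty]
    intro h
    apply hA
    have : A = comp A x := Set.Subset.antisymm (Set.diff_eq_empty.mp h) (hsub A x)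
    rw [this]; exact hconn A x hx
  refine ⟨{p | ∃ A, A ∉ κ ∧ ∃ x ∈ A, p = (comp A x, A \ comp A x)}, ?_, ?_⟩
  · rintro p ⟨A, hA, x, hx, rfl⟩
    exact ⟨⟨x, hmem A x hx⟩, hdiffne A x hA hx, Set.disjoint_sdiff_right⟩
  · ext B
    simp only [Set.mem_setOf_eq]
    constructor
    · intro hB hsep
      rcases hsep with ⟨p, ⟨A, hA, x, hx, rfl⟩, hBsub, ⟨y, hyB, hyc⟩, ⟨z, hzB, hzA, hzc⟩⟩
      -- y ∈ comp A x: get C ∈ κ, C ⊆ A, x ∈ C, y ∈ C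
      rcases hyc with ⟨C, ⟨hCκ, hCA, hxC⟩, hyC⟩
      -- B ⊆ A
      have hBA : B ⊆ A := by
        intro b hb
        rcases hBsub hb with h | h
        · exact hsub A x h
        · exact h.1
      -- C ∪ B ∈ κ
      have hCB : C ∪ B ∈ κ := by
        have := hκ.2 {C, B} (by rintro D (rfl | rfl); exacts [hCκ, hB]) ⟨y, by simp [hyC, hyB]⟩
        simpa using this
      have hBcomp : B ⊆ comp A x := by
        intro b hb
        exact ⟨C ∪ B, ⟨hCB, Set.union_subset hCA hBA, Or.inl hxC⟩, Or.inr hb⟩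
      exact hzc (hBcomp hzB)
    · intro h
      by_contra hB
      have hAne : B.Nonempty := by
        rw [Set.nonempty_iff_ne_empty]
        rintro rfl; exact hB hκ.1
      rcases hAne with ⟨x, hx⟩
      apply h
      refine ⟨(comp B x, B \ comp B x), ⟨B, hB, x, hx, rfl⟩, ?_, ⟨x, hx, hmem B x hx⟩, ?_⟩
      · intro b hb
        by_cases hbc : b ∈ comp B x
        · exact Or.inl hbc
        · exact Or.inr ⟨hb, hbc⟩
      · rcases hdiffne B x hB hx with ⟨z, hz⟩
        exact ⟨z, hz.1, hz⟩
end

section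
/- Every connectivity space admits a clear and distinct connective representation in an integral connectivity space: for every connectivity space (X, κ_X) there exist a set Y, an integral connectivity structure κ_Y on Y, and a map ρ assigning to each x ∈ X a nonempty subset ρ(x) ⊆ Y, such that (i) for every K ∈ κ_X, ⋃_{x∈K} ρ(x) ∈ κ_Y, (ii) for every A ⊆ X with A ∉ κ_X, ⋃_{x∈A} ρ(x) ∉ κ_Y, and (iii) ρ(x) ∩ ρ(y) = ∅ whenever x ≠ y. -/
/-- Every connectivity space admits a clear and distinct connective representation
in an integral connectivity space. -/
theorem exists_clear_distinct_representation
    {X : Type u} (κX : Set (Set X)) (hX : IsConnectivity κX) :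
    ∃ (Y : Type u) (κY : Set (Set Y)) (ρ : X → Set Y),
      IsConnectivity κY ∧ IsIntegralCnct κY ∧
      (∀ x : X, (ρ x).Nonempty) ∧
      (∀ K ∈ κX, (⋃ x ∈ K, ρ x) ∈ κY) ∧
      (∀ A : Set X, A ∉ κX → (⋃ x ∈ A, ρ x) ∉ κY) ∧
      (∀ x y : X, x ≠ y → ρ x ∩ ρ y = ∅) := by
  classical
  refine ⟨X × Bool,
    {T | (∃ K ∈ κX, T = Prod.fst ⁻¹' K) ∨ ∃ p : X × Bool, T = {p}},
    fun x => Prod.fst ⁻¹' {x}, ?_, ?_, ?_, ?_, ?_, ?_⟩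
  · constructor
    · exact Or.inl ⟨∅, hX.1, by simp⟩
    · intro ℐ hℐ ⟨p, hp⟩
      by_cases hall : ∀ T ∈ ℐ, T = {p}
      · rcases Set.eq_empty_or_nonempty ℐ with h | ⟨T0, hT0⟩
        · subst h; exact Or.inl ⟨∅, hX.1, by simp⟩
        · right
          refine ⟨p, ?_⟩
          apply Set.eq_singleton_iff_unique_mem.2
          refine ⟨⟨T0, hT0, (hall T0 hT0) ▸ rfl⟩, ?_⟩
          rintro q ⟨T, hT, hq⟩
          rw [hall T hT] at hq; exact hq
      · push_neg at hall
        obtain ⟨T0, hT0, hT0ne⟩ := hall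
        -- T0 must be a preimage form
        have hT0' : ∃ K ∈ κX, T0 = Prod.fst ⁻¹' K := by
          rcases hℐ hT0 with h | ⟨q, hq⟩
          · exact h
          · exfalso
            have := hp T0 hT0
            rw [hq] at this
            exact hT0ne (by rw [hq, this])
        obtain ⟨K0, hK0, hK0eq⟩ := hT0'
        set 𝒦 : Set (Set X) := {K | K ∈ κX ∧ Prod.fst ⁻¹' K ∈ ℐ} with h𝒦
        have hmemK : ∀ K ∈ 𝒦, p.1 ∈ K := by
          intro K hK
          exact hp _ hK.2
        have hU : ⋃₀ 𝒦 ∈ κX := by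
          apply hX.2 𝒦 (fun K hK => hK.1)
          exact ⟨p.1, fun K hK => hmemK K hK⟩
        have hK0mem : K0 ∈ 𝒦 := ⟨hK0, by rw [← hK0eq]; exact hT0⟩
        left
        refine ⟨⋃₀ 𝒦, hU, ?_⟩
        ext q
        constructor
        · rintro ⟨T, hT, hq⟩
          rcases hℐ hT with ⟨K, hK, rfl⟩ | ⟨r, rfl⟩
          · exact ⟨K, ⟨hK, hT⟩, hq⟩
          · have hpr : p = r := hp _ hT
            have hqr : q = r := hq
            have hqp : q = p := by rw [hqr, hpr]
            subst hqp
            exact ⟨K0, hK0mem, hmemK K0 hK0mem⟩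
        · rintro ⟨K, hK, hq⟩
          exact ⟨Prod.fst ⁻¹' K, hK.2, hq⟩
  · intro p
    exact Or.inr ⟨p, rfl⟩
  · intro x
    exact ⟨(x, true), rfl⟩
  · intro K hK
    left
    refine ⟨K, hK, ?_⟩
    ext q; simp
  · intro A hA hmem
    have key : (⋃ x ∈ A, Prod.fst ⁻¹' ({x} : Set X) : Set (X × Bool)) = Prod.fst ⁻¹' A := by
      ext q; simp
    rw [key] at hmem
    rcases hmem with ⟨K, hK, hKeq⟩ | ⟨p, hpeq⟩
    · have : A = K := by
        ext x
        constructor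
        · intro hx
          have : ((x, true) : X × Bool) ∈ Prod.fst ⁻¹' A := hx
          rw [hKeq] at this; exact this
        · intro hx
          have : ((x, true) : X × Bool) ∈ Prod.fst ⁻¹' K := hx
          rw [← hKeq] at this; exact this
      exact hA (this ▸ hK)
    · have hp1 : p ∈ Prod.fst ⁻¹' A := by rw [hpeq]; rfl
      have hp2 : ((p.1, !p.2) : X × Bool) ∈ Prod.fst ⁻¹' A := hp1
      rw [hpeq] at hp1 hp2
      have : (p.1, !p.2) = p := hp2
      have hsnd : (!p.2) = p.2 := congrArg Prod.snd this
      simp at hsnd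
  · intro x y hxy
    ext q
    simp only [Set.mem_inter_iff, Set.mem_preimage, Set.mem_singleton_iff, Set.mem_empty_iff_false,
      iff_false, not_and]
    intro h1 h2
    exact hxy (h1 ▸ h2 ▸ rfl)
end

section
/- Let Z = (E, κ₀, κ₁) be a regular connective foliation (κ₀ ⊆ κ₁), and let ρ be a clear and distinct connective representation of an integral connectivity space (X, κ_X) in a connectivity space (Y, κ_Y). Let ℱ(Z) be the set of leaves of Z, let κ↓ = {𝒜 ⊆ ℱ(Z) : ⋃𝒜 ∈ κ₁} be the induced leaf structure on ℱ(Z), and let κ₀' be the connectivity structure on Y generated by {K ∈ κ_Y : ∃ a ∈ X, K ⊆ ρ(a)}. Call a pair (α, β) a representation morphism if α : ℱ(Z) → X satisfies α''𝒜 ∈ κ_X for every 𝒜 ∈ κ↓, β : E → Y satisfies β''K ∈ κ_Y for every K ∈ κ₁, and β''F ⊆ ρ(α(F)) for every leaf F ∈ ℱ(Z); call β : E → Y a foliation morphism if β''K ∈ κ₀' for every K ∈ κ₀ and β''K ∈ κ_Y for every K ∈ κ₁. Then the map (α, β) ↦ β is a bijection from the set of representation morphisms onto the set of foliation morphisms.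 -/
/-- The connectivity structure generated by a family of subsets: the intersection of
all connectivity structures containing it. -/
def generated {E : Type*} (𝒜 : Set (Set E)) : Set (Set E) :=
  ⋂₀ {κ | IsConnectivity κ ∧ 𝒜 ⊆ κ}

/-- A leaf: a maximal nonempty connected subset. -/
def IsLeaf {E : Type*} (κ₀ : Set (Set E)) (F : Set E) : Prop :=
  F ∈ κ₀ ∧ F.Nonempty ∧ ∀ K ∈ κ₀, F ⊆ K → K = F

open Set

section Connectivity

variable {E : Type*} {κ : Set (Set E)}

theorem IsConnectivity.union_mem (hκ : IsConnectivity κ) {A B : Set E} (hA : A ∈ κ) (hB : B ∈ κ)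
    (hAB : (A ∩ B).Nonempty) : A ∪ B ∈ κ := by
  have h := hκ.2 {A, B} (pair_subset hA hB) (by rwa [sInter_pair])
  rwa [sUnion_pair] at h

theorem IsConnectivity.union_biUnion_mem (hκ : IsConnectivity κ) {ι : Type*} {s : Set ι}
    {C : Set E} {K : ι → Set E} (hC : C ∈ κ) (hK : ∀ i ∈ s, K i ∈ κ)
    (hmeet : ∀ i ∈ s, (C ∩ K i).Nonempty) : C ∪ ⋃ i ∈ s, K i ∈ κ := by
  rcases s.eq_empty_or_nonempty with rfl | ⟨i₀, hi₀⟩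
  · simpa using hC
  have hfam : insert C ((fun i => C ∪ K i) '' s) ⊆ κ := by
    rintro L (rfl | ⟨i, hi, rfl⟩)
    exacts [hC, hκ.union_mem hC (hK i hi) (hmeet i hi)]
  have hcommon : C ⊆ ⋂₀ insert C ((fun i => C ∪ K i) '' s) := by
    rintro x hx L (rfl | ⟨i, -, rfl⟩)
    exacts [hx, Or.inl hx]
  have h := hκ.2 _ hfam (((hmeet i₀ hi₀).mono inter_subset_left).mono hcommon)
  rw [sUnion_insert, sUnion_image] at h
  convert h using 1
  ext x
  simp only [mem_union, mem_iUnion₂]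
  grind

theorem generated_subset {𝒜 : Set (Set E)} (hκ : IsConnectivity κ) (h𝒜 : 𝒜 ⊆ κ) :
    generated 𝒜 ⊆ κ :=
  sInter_subset_of_mem ⟨hκ, h𝒜⟩

theorem subset_generated (𝒜 : Set (Set E)) : 𝒜 ⊆ generated 𝒜 :=
  fun _ hK => mem_sInter.2 fun _ hκ => hκ.2 hK

theorem empty_mem_generated (𝒜 : Set (Set E)) : ∅ ∈ generated 𝒜 :=
  mem_sInter.2 fun _ hκ => hκ.1.1

theorem exists_isLeaf_superset (hκ : IsConnectivity κ) {K : Set E} (hK : K ∈ κ)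
    (hne : K.Nonempty) : ∃ F, IsLeaf κ F ∧ K ⊆ F := by
  let 𝒦 : Set (Set E) := {L | L ∈ κ ∧ K ⊆ L}
  have hK𝒦 : K ⊆ ⋃₀ 𝒦 := subset_sUnion_of_mem (show K ∈ 𝒦 from ⟨hK, subset_rfl⟩)
  refine ⟨⋃₀ 𝒦, ⟨hκ.2 𝒦 (fun L hL => hL.1) (hne.mono (subset_sInter fun L hL => hL.2)),
    hne.mono hK𝒦, fun L hL h𝒦L => ?_⟩, hK𝒦⟩
  exact (subset_sUnion_of_mem (show L ∈ 𝒦 from ⟨hL, hK𝒦.trans h𝒦L⟩)).antisymm h𝒦L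

end Connectivity

section Representation

variable {X Y : Type*} {κX : Set (Set X)} {κY : Set (Set Y)} {ρ : X → Set Y}

def fibrePieces (κY : Set (Set Y)) (ρ : X → Set Y) : Set (Set Y) :=
  {K | K ∈ κY ∧ ∃ a, K ⊆ ρ a}

theorem eq_of_inter_nonempty (hdist : ∀ x y : X, x ≠ y → ρ x ∩ ρ y = ∅) {a b : X}
    (h : (ρ a ∩ ρ b).Nonempty) : a = b := by
  by_contra hab
  exact h.ne_empty (hdist a b hab)

theorem isConnectivity_insert_empty_fibrePieces (hY : IsConnectivity κY)
    (hdist : ∀ x y : X, x ≠ y → ρ x ∩ ρ y = ∅) :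
    IsConnectivity (insert ∅ (fibrePieces κY ρ)) := by
  refine ⟨mem_insert _ _, fun ℐ hℐ ⟨y, hy⟩ => ?_⟩
  rw [mem_sInter] at hy
  have hℐS : ℐ ⊆ fibrePieces κY ρ := fun K hK =>
    (hℐ hK).resolve_left fun h => by simpa [h] using hy K hK
  rcases ℐ.eq_empty_or_nonempty with rfl | ⟨K₀, hK₀⟩
  · simp
  obtain ⟨-, a₀, hK₀a₀⟩ := hℐS hK₀
  refine Or.inr ⟨hY.2 ℐ (fun K hK => (hℐS hK).1) ⟨y, mem_sInter.2 hy⟩, a₀, ?_⟩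
  rintro z ⟨K, hK, hzK⟩
  obtain ⟨-, a, hKa⟩ := hℐS hK
  obtain rfl : a = a₀ := eq_of_inter_nonempty hdist ⟨y, hKa (hy K hK), hK₀a₀ (hy K₀ hK₀)⟩
  exact hKa hzK

/-- Disjointness of the fibres makes the generation trivial: nothing is glued across fibres. -/
theorem mem_generated_fibrePieces_iff (hY : IsConnectivity κY)
    (hdist : ∀ x y : X, x ≠ y → ρ x ∩ ρ y = ∅) {K : Set Y} :
    K ∈ generated (fibrePieces κY ρ) ↔ K = ∅ ∨ K ∈ fibrePieces κY ρ := by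
  refine ⟨fun hK => generated_subset (isConnectivity_insert_empty_fibrePieces hY hdist)
    (subset_insert _ _) hK, ?_⟩
  rintro (rfl | hK)
  exacts [empty_mem_generated _, subset_generated _ hK]

theorem image_mem_of_biUnion_mem (hY : IsConnectivity κY) (hρ : ∀ x, ρ x ∈ κY)
    (hclear : ∀ A : Set X, A ∉ κX → (⋃ x ∈ A, ρ x) ∉ κY) {ι : Type*} {s : Set ι} {f : ι → X}
    {B : ι → Set Y} (hB : ∀ i ∈ s, (B i).Nonempty) (hBf : ∀ i ∈ s, B i ⊆ ρ (f i))
    (hU : (⋃ i ∈ s, B i) ∈ κY) : f '' s ∈ κX := by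
  have hcover : (⋃ i ∈ s, B i) ⊆ ⋃ i ∈ s, ρ (f i) := iUnion₂_mono hBf
  have hmeet : ∀ i ∈ s, ((⋃ j ∈ s, B j) ∩ ρ (f i)).Nonempty := fun i hi =>
    (hB i hi).mono (subset_inter (subset_biUnion_of_mem hi) (hBf i hi))
  have h := hY.union_biUnion_mem hU (fun i _ => hρ (f i)) hmeet
  rw [union_eq_right.2 hcover, ← biUnion_image] at h
  by_contra hs
  exact hclear _ hs h

end Representation

theorem repMor_folMor_bijection_general
    {E X Y : Type*} (κ₀ κ₁ : Set (Set E))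
    (h₀ : IsConnectivity κ₀) (hreg : κ₀ ⊆ κ₁)
    (κX : Set (Set X)) (κY : Set (Set Y))
    (hXi : IsIntegralCnct κX) (hY : IsConnectivity κY)
    (ρ : X → Set Y)
    (hrep : ∀ K ∈ κX, (⋃ x ∈ K, ρ x) ∈ κY)
    (hclear : ∀ A : Set X, A ∉ κX → (⋃ x ∈ A, ρ x) ∉ κY)
    (hdist : ∀ x y : X, x ≠ y → ρ x ∩ ρ y = ∅)
    -- the induced leaf structure on the set of leaves of the foliation
    (κdown : Set (Set {F : Set E // IsLeaf κ₀ F}))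
    (hκdown : κdown = {𝒜 : Set {F : Set E // IsLeaf κ₀ F} | (⋃ F ∈ 𝒜, F.1) ∈ κ₁})
    -- the internal structure of the foliation associated with ρ
    (κ₀' : Set (Set Y))
    (hκ₀' : κ₀' = generated {K : Set Y | K ∈ κY ∧ ∃ a : X, K ⊆ ρ a})
    -- representation morphisms
    (RepMor : ({F : Set E // IsLeaf κ₀ F} → X) → (E → Y) → Prop)
    (hRepMor : ∀ α β, RepMor α β ↔
      ((∀ 𝒜 ∈ κdown, α '' 𝒜 ∈ κX) ∧ (∀ K ∈ κ₁, β '' K ∈ κY) ∧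
        ∀ F : {F : Set E // IsLeaf κ₀ F}, β '' F.1 ⊆ ρ (α F)))
    -- foliation morphisms
    (FolMor : (E → Y) → Prop)
    (hFolMor : ∀ β, FolMor β ↔
      ((∀ K ∈ κ₀, β '' K ∈ κ₀') ∧ (∀ K ∈ κ₁, β '' K ∈ κY))) :
    (∀ α β, RepMor α β → FolMor β) ∧
    (∀ β, FolMor β → ∃! α, RepMor α β) := by
  subst hκdown hκ₀'
  have hρ : ∀ x, ρ x ∈ κY := fun x => by simpa using hrep {x} (hXi x)
  refine ⟨fun α β hαβ => ?_, fun β hβ => ?_⟩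
  · obtain ⟨-, hβ₁, hβα⟩ := (hRepMor α β).1 hαβ
    refine (hFolMor β).2 ⟨fun K hK => (mem_generated_fibrePieces_iff hY hdist).2 ?_, hβ₁⟩
    rcases K.eq_empty_or_nonempty with rfl | hKne
    · exact Or.inl (image_empty β)
    obtain ⟨F, hF, hKF⟩ := exists_isLeaf_superset h₀ hK hKne
    exact Or.inr ⟨hβ₁ K (hreg hK), α ⟨F, hF⟩, (image_mono hKF).trans (hβα ⟨F, hF⟩)⟩
  obtain ⟨hβ₀, hβ₁⟩ := (hFolMor β).1 hβ
  have hβne : ∀ F : {F : Set E // IsLeaf κ₀ F}, (β '' F.1).Nonempty := fun F => F.2.2.1.image β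
  have hfibre : ∀ F : {F : Set E // IsLeaf κ₀ F}, ∃ a, β '' F.1 ⊆ ρ a := fun F =>
    (((mem_generated_fibrePieces_iff hY hdist).1 (hβ₀ F.1 F.2.1)).resolve_left
      (hβne F).ne_empty).2
  choose α hα using hfibre
  refine ⟨α, (hRepMor α β).2 ⟨fun 𝒜 h𝒜 => ?_, hβ₁, hα⟩, fun α' hα' => ?_⟩
  · refine image_mem_of_biUnion_mem hY hρ hclear (fun F _ => hβne F) (fun F _ => hα F) ?_
    simpa only [image_iUnion₂] using hβ₁ _ h𝒜
  · funext F
    exact eq_of_inter_nonempty hdist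
      ((hβne F).mono (subset_inter (((hRepMor α' β).1 hα').2.2 F) (hα F)))

/-- The adjunction bijection between morphisms of representations out of the induced
leaf representation of a regular foliation, and morphisms of foliations into the
foliation associated with a clear and distinct representation of an integral space. -/
theorem repMor_folMor_bijection
    {E X Y : Type*} (κ₀ κ₁ : Set (Set E))
    (h₀ : IsConnectivity κ₀) (h₁ : IsConnectivity κ₁) (hreg : κ₀ ⊆ κ₁)
    (κX : Set (Set X)) (κY : Set (Set Y))
    (hX : IsConnectivity κX) (hXi : IsIntegralCnct κX) (hY : IsConnectivity κY)
    (ρ : X → Set Y)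
    (hne : ∀ x : X, (ρ x).Nonempty)
    (hrep : ∀ K ∈ κX, (⋃ x ∈ K, ρ x) ∈ κY)
    (hclear : ∀ A : Set X, A ∉ κX → (⋃ x ∈ A, ρ x) ∉ κY)
    (hdist : ∀ x y : X, x ≠ y → ρ x ∩ ρ y = ∅)
    -- the induced leaf structure on the set of leaves of the foliation
    (κdown : Set (Set {F : Set E // IsLeaf κ₀ F}))
    (hκdown : κdown = {𝒜 : Set {F : Set E // IsLeaf κ₀ F} | (⋃ F ∈ 𝒜, F.1) ∈ κ₁})
    -- the internal structure of the foliation associated with ρ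
    (κ₀' : Set (Set Y))
    (hκ₀' : κ₀' = generated {K : Set Y | K ∈ κY ∧ ∃ a : X, K ⊆ ρ a})
    -- representation morphisms
    (RepMor : ({F : Set E // IsLeaf κ₀ F} → X) → (E → Y) → Prop)
    (hRepMor : ∀ α β, RepMor α β ↔
      ((∀ 𝒜 ∈ κdown, α '' 𝒜 ∈ κX) ∧ (∀ K ∈ κ₁, β '' K ∈ κY) ∧
        ∀ F : {F : Set E // IsLeaf κ₀ F}, β '' F.1 ⊆ ρ (α F)))
    -- foliation morphisms
    (FolMor : (E → Y) → Prop)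
    (hFolMor : ∀ β, FolMor β ↔
      ((∀ K ∈ κ₀, β '' K ∈ κ₀') ∧ (∀ K ∈ κ₁, β '' K ∈ κY))) :
    (∀ α β, RepMor α β → FolMor β) ∧
    (∀ β, FolMor β → ∃! α, RepMor α β) :=
  repMor_folMor_bijection_general κ₀ κ₁ h₀ hreg κX κY hXi hY ρ hrep hclear hdist κdown hκdown κ₀'
    hκ₀' RepMor hRepMor FolMor hFolMor
end

section
/- For every separation device 𝒮 on a set E, the collection κ(𝒮) = {K ⊆ E : K is not separated by 𝒮} is an integral connectivity structure on E. -/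
/-- The unseparated sets of a separation device form an integral connectivity
structure. -/
theorem separation_device_gives_integral_connectivity
    {E : Type*} (𝒮 : Set (Set E × Set E)) (h𝒮 : IsSeparationDevice 𝒮) :
    IsConnectivity {K : Set E | ¬ SeparatedBy 𝒮 K} ∧
      IsIntegralCnct {K : Set E | ¬ SeparatedBy 𝒮 K} := by
  refine ⟨⟨?_, ?_⟩, ?_⟩
  · rintro ⟨p, _, _, ⟨x, hx, _⟩, _⟩
    exact hx
  · rintro ℐ hℐ ⟨x, hx⟩ ⟨p, hp, hsub, hS, hT⟩
    obtain ⟨_, _, hdisj⟩ := h𝒮 p hp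
    obtain ⟨a, haU, haT⟩ := hT
    obtain ⟨A0, hA0, haA0⟩ := haU
    have hxU : x ∈ ⋃₀ ℐ := ⟨A0, hA0, hx A0 hA0⟩
    have key : ∀ S T : Set E,
        p.1 ∪ p.2 = S ∪ T →
        (∀ A : Set E, A ⊆ S ∪ T → (A ∩ S).Nonempty → (A ∩ T).Nonempty →
          SeparatedBy 𝒮 A) → x ∈ S → (⋃₀ ℐ ∩ T).Nonempty → False := by
      rintro S T hST hw hxS ⟨b, ⟨B, hB, hbB⟩, hbT⟩
      exact hℐ hB (hw B (fun y hy => by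
          have := hsub (⟨B, hB, hy⟩ : y ∈ ⋃₀ ℐ); rw [hST] at this; exact this)
        ⟨x, hx B hB, hxS⟩ ⟨b, hbB, hbT⟩)
    rcases hsub hxU with hx1 | hx2
    · exact key p.1 p.2 rfl (fun A h1 h2 h3 => ⟨p, hp, h1, h2, h3⟩) hx1
        ⟨a, ⟨A0, hA0, haA0⟩, haT⟩
    · obtain ⟨c, hcU, hcS⟩ := hS
      exact key p.2 p.1 (Set.union_comm _ _) (fun A h1 h2 h3 => ⟨p, hp, by rwa [Set.union_comm] at h1, h3, h2⟩)
        hx2 ⟨c, hcU, hcS⟩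
  · rintro x ⟨p, hp, hsub, ⟨a, ha1, ha2⟩, ⟨b, hb1, hb2⟩⟩
    obtain ⟨_, _, hdisj⟩ := h𝒮 p hp
    cases ha1; cases hb1
    exact hdisj.ne_of_mem ha2 hb2 rfl
end

section
/- Let X be a topological space, let A and B be nonempty preconnected subsets of X, and let x ∈ X with x ∉ A ∪ B. If neither A ∪ {x} nor B ∪ {x} is preconnected, then A ∪ B ∪ {x} is not preconnected. -/
lemma sep_of_not_preconnected_union_singleton
    {X : Type*} [TopologicalSpace X] {A : Set X} {x : X}
    (hpA : IsPreconnected A)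
    (h1 : ¬ IsPreconnected (A ∪ {x})) :
    ∃ U V : Set X, IsOpen U ∧ IsOpen V ∧ A ⊆ U ∧ x ∈ V ∧ x ∉ U ∧ A ∩ V = ∅ := by
  rw [IsPreconnected] at h1
  push_neg at h1
  obtain ⟨u, v, hu, hv, hcov, hsu, hsv, hempty⟩ := h1
  have hAcov : A ⊆ u ∪ v := fun a ha => hcov (Or.inl ha)
  have hAempty : A ∩ (u ∩ v) = ∅ := by
    apply Set.eq_empty_of_subset_empty
    rw [← hempty]
    exact Set.inter_subset_inter_left _ Set.subset_union_left
  have : ¬ ((A ∩ u).Nonempty ∧ (A ∩ v).Nonempty) := by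
    rintro ⟨h1', h2'⟩
    have := hpA u v hu hv hAcov h1' h2'
    rw [hAempty] at this
    exact Set.not_nonempty_empty this
  rcases not_and_or.mp this with h | h
  · -- A ∩ u = ∅, so A ⊆ v, x ∈ u
    rw [Set.not_nonempty_iff_eq_empty] at h
    have hAv : A ⊆ v := fun a ha => (hAcov ha).resolve_left
      (fun hau => Set.eq_empty_iff_forall_notMem.mp h a ⟨ha, hau⟩)
    have hxu : x ∈ u := by
      obtain ⟨y, hy, hyu⟩ := hsu
      rcases hy with hyA | hyx
      · exact (Set.eq_empty_iff_forall_notMem.mp h y ⟨hyA, hyu⟩).elim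
      · exact hyx ▸ hyu
    have hxv : x ∉ v := fun hxv =>
      Set.eq_empty_iff_forall_notMem.mp hempty x ⟨Or.inr rfl, hxu, hxv⟩
    exact ⟨v, u, hv, hu, hAv, hxu, hxv, h⟩
  · rw [Set.not_nonempty_iff_eq_empty] at h
    have hAu : A ⊆ u := fun a ha => (hAcov ha).resolve_right
      (fun hav => Set.eq_empty_iff_forall_notMem.mp h a ⟨ha, hav⟩)
    have hxv : x ∈ v := by
      obtain ⟨y, hy, hyv⟩ := hsv
      rcases hy with hyA | hyx
      · exact absurd (⟨hyA, hyv⟩ : y ∈ A ∩ v) (Set.eq_empty_iff_forall_notMem.mp h y)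
      · exact hyx ▸ hyv
    have hxu : x ∉ u := fun hxu =>
      Set.eq_empty_iff_forall_notMem.mp hempty x ⟨Or.inr rfl, hxu, hxv⟩
    exact ⟨u, v, hu, hv, hAu, hxv, hxu, h⟩

/-- In a topological space, if `A` and `B` are nonempty preconnected sets and `x` is a
point outside `A ∪ B` such that neither `A ∪ {x}` nor `B ∪ {x}` is preconnected, then
`A ∪ B ∪ {x}` is not preconnected. -/
theorem not_preconnected_union_union_singleton
    {X : Type*} [TopologicalSpace X] {A B : Set X} {x : X}
    (hA : A.Nonempty) (hB : B.Nonempty)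
    (hpA : IsPreconnected A) (hpB : IsPreconnected B)
    (hx : x ∉ A ∪ B)
    (h1 : ¬ IsPreconnected (A ∪ {x})) (h2 : ¬ IsPreconnected (B ∪ {x})) :
    ¬ IsPreconnected (A ∪ B ∪ {x}) := by
  obtain ⟨U₁, V₁, hU₁, hV₁, hAU, hxV₁, hxU₁, hAV₁⟩ :=
    sep_of_not_preconnected_union_singleton hpA h1
  obtain ⟨U₂, V₂, hU₂, hV₂, hBU, hxV₂, hxU₂, hBV₂⟩ :=
    sep_of_not_preconnected_union_singleton hpB h2
  intro hpre
  have hcov : A ∪ B ∪ {x} ⊆ (U₁ ∪ U₂) ∪ (V₁ ∩ V₂) := by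
    rintro y ((hy | hy) | hy)
    · exact Or.inl (Or.inl (hAU hy))
    · exact Or.inl (Or.inr (hBU hy))
    · exact Or.inr ⟨hy ▸ hxV₁, hy ▸ hxV₂⟩
  obtain ⟨a, haA⟩ := hA
  have h1' : ((A ∪ B ∪ {x}) ∩ (U₁ ∪ U₂)).Nonempty :=
    ⟨a, Or.inl (Or.inl haA), Or.inl (hAU haA)⟩
  have h2' : ((A ∪ B ∪ {x}) ∩ (V₁ ∩ V₂)).Nonempty :=
    ⟨x, Or.inr rfl, hxV₁, hxV₂⟩
  obtain ⟨y, hy, hyU, hyV₁, hyV₂⟩ :=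
    hpre (U₁ ∪ U₂) (V₁ ∩ V₂) (hU₁.union hU₂) (hV₁.inter hV₂) hcov h1' h2'
  rcases hy with (hyA | hyB) | hyx
  · exact Set.eq_empty_iff_forall_notMem.mp hAV₁ y ⟨hyA, hyV₁⟩
  · exact Set.eq_empty_iff_forall_notMem.mp hBV₂ y ⟨hyB, hyV₂⟩
  · rcases hyU with h | h
    · exact hxU₁ (hyx ▸ h)
    · exact hxU₂ (hyx ▸ h)
end

section
/- The sufficient condition for connectedness in the quotient leaf space is not necessary: let E = {a, a', b, b', c, c'} be a six-element set, κ₀ = {∅, {a,a'}, {b,b'}, {c,c'}} and κ₁ = {∅, {a,b}, {b',c'}} (both are connectivity structures on E). The leaves of the foliation (E, κ₀, κ₁) are A = {a,a'}, B = {b,b'} and C = {c,c'}. Then the set {A, B, C} belongs to the quotient leaf structure (the connectivity structure on the set of leaves generated by the images ℓ''K of the sets K ∈ κ₁ under the map ℓ sending each point of the domain to its leaf), although there is no K ∈ κ₁ with K ⊆ A ∪ B ∪ C meeting all three leaves A, B and C. -/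
/-- The internal structure of the six-point counterexample:
`a = 0, a' = 1, b = 2, b' = 3, c = 4, c' = 5`. -/
def κ₀ : Set (Set (Fin 6)) := {∅, {0, 1}, {2, 3}, {4, 5}}

/-- The external structure of the six-point counterexample. -/
def κ₁ : Set (Set (Fin 6)) := {∅, {0, 2}, {3, 5}}

lemma isConnectivity_of_disj {E : Type*} {κ : Set (Set E)} (h0 : ∅ ∈ κ)
    (hd : ∀ A ∈ κ, ∀ B ∈ κ, (A ∩ B).Nonempty → A = B) : IsConnectivity κ := by
  refine ⟨h0, fun ℐ hℐ ⟨x, hx⟩ => ?_⟩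
  rcases Set.eq_empty_or_nonempty ℐ with rfl | ⟨A, hA⟩
  · simpa using h0
  · have : ⋃₀ ℐ = A := by
      apply Set.eq_of_subset_of_subset
      · rintro y ⟨B, hB, hy⟩
        have := hd A (hℐ hA) B (hℐ hB) ⟨x, hx _ hA, hx _ hB⟩
        rwa [this]
      · exact Set.subset_sUnion_of_mem hA
    rw [this]; exact hℐ hA

lemma leaves_eq : {F : Set (Fin 6) | IsLeaf κ₀ F} =
    ({{0, 1}, {2, 3}, {4, 5}} : Set (Set (Fin 6))) := by
  ext F
  constructor
  · rintro ⟨hF, hne, -⟩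
    rcases hF with rfl|rfl|rfl|rfl
    · exact absurd hne (by simp)
    · left; rfl
    · right; left; rfl
    · right; right; rfl
  · have key : ∀ F : Set (Fin 6), F ∈ κ₀ → F.Nonempty →
        (∀ K ∈ κ₀, F ⊆ K → K = F) → IsLeaf κ₀ F := fun F a b c => ⟨a, b, c⟩
    rintro (rfl|rfl|rfl)
    · refine key _ (by simp [κ₀]) ⟨0, by simp⟩ ?_
      rintro K (rfl|rfl|rfl|rfl) hsub
      · simpa using hsub (show (0:Fin 6) ∈ ({0,1}:Set (Fin 6)) by simp)
      · rfl
      · simpa using hsub (show (0:Fin 6) ∈ ({0,1}:Set (Fin 6)) by simp)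
      · simpa using hsub (show (0:Fin 6) ∈ ({0,1}:Set (Fin 6)) by simp)
    · refine key _ (by simp [κ₀]) ⟨2, by simp⟩ ?_
      rintro K (rfl|rfl|rfl|rfl) hsub
      · simpa using hsub (show (2:Fin 6) ∈ ({2,3}:Set (Fin 6)) by simp)
      · simpa using hsub (show (2:Fin 6) ∈ ({2,3}:Set (Fin 6)) by simp)
      · rfl
      · simpa using hsub (show (2:Fin 6) ∈ ({2,3}:Set (Fin 6)) by simp)
    · refine key _ (by simp [κ₀]) ⟨4, by simp⟩ ?_
      rintro K (rfl|rfl|rfl|rfl) hsub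
      · simpa using hsub (show (4:Fin 6) ∈ ({4,5}:Set (Fin 6)) by simp)
      · simpa using hsub (show (4:Fin 6) ∈ ({4,5}:Set (Fin 6)) by simp)
      · simpa using hsub (show (4:Fin 6) ∈ ({4,5}:Set (Fin 6)) by simp)
      · rfl


/-- The sufficient condition for connectedness in the quotient leaf space is not
necessary: in the six-point foliation, the set of the three leaves
`A = {a,a'}, B = {b,b'}, C = {c,c'}` is connected in the quotient leaf structure,
although no external connected set meets all three leaves. -/
theorem quotient_leaf_connectedness_condition_not_necessary :
    IsConnectivity κ₀ ∧ IsConnectivity κ₁ ∧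
    {F : Set (Fin 6) | IsLeaf κ₀ F} =
      ({{0, 1}, {2, 3}, {4, 5}} : Set (Set (Fin 6))) ∧
    ({{0, 1}, {2, 3}, {4, 5}} : Set (Set (Fin 6))) ∈
      generated
        {S : Set (Set (Fin 6)) |
          ∃ K ∈ κ₁, S = {F : Set (Fin 6) | IsLeaf κ₀ F ∧ (F ∩ K).Nonempty}} ∧
    ¬ ∃ K ∈ κ₁, K ⊆ (({0, 1} ∪ {2, 3} ∪ {4, 5}) : Set (Fin 6)) ∧
        (K ∩ ({0, 1} : Set (Fin 6))).Nonempty ∧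
        (K ∩ ({2, 3} : Set (Fin 6))).Nonempty ∧
        (K ∩ ({4, 5} : Set (Fin 6))).Nonempty := by
  have hleaf : ∀ F : Set (Fin 6), IsLeaf κ₀ F ↔
      F = {0,1} ∨ F = {2,3} ∨ F = {4,5} := by
    intro F
    have := Set.ext_iff.mp leaves_eq F
    simpa using this
  refine ⟨?_, ?_, leaves_eq, ?_, ?_⟩
  · exact isConnectivity_of_disj (by simp [κ₀]) (by
      rintro A (rfl|rfl|rfl|rfl) B (rfl|rfl|rfl|rfl) ⟨x, hx1, hx2⟩ <;>
        simp_all <;> omega)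
  · exact isConnectivity_of_disj (by simp [κ₁]) (by
      rintro A (rfl|rfl|rfl) B (rfl|rfl|rfl) ⟨x, hx1, hx2⟩ <;>
        simp_all <;> omega)
  · -- generated membership
    rintro κ ⟨⟨-, hκ⟩, hsub⟩
    have hAB : ({{0,1}, {2,3}} : Set (Set (Fin 6))) ∈ κ := by
      apply hsub
      refine ⟨{0, 2}, by simp [κ₁], ?_⟩
      ext F
      simp only [Set.mem_insert_iff, Set.mem_singleton_iff, Set.mem_setOf_eq, hleaf]
      constructor
      · rintro (rfl|rfl)
        · exact ⟨Or.inl rfl, 0, by simp⟩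
        · exact ⟨Or.inr (Or.inl rfl), 2, by simp⟩
      · rintro ⟨(rfl|rfl|rfl), x, hx1, hx2⟩
        · exact Or.inl rfl
        · exact Or.inr rfl
        · exfalso; simp_all; omega
    have hBC : ({{2,3}, {4,5}} : Set (Set (Fin 6))) ∈ κ := by
      apply hsub
      refine ⟨{3, 5}, by simp [κ₁], ?_⟩
      ext F
      simp only [Set.mem_insert_iff, Set.mem_singleton_iff, Set.mem_setOf_eq, hleaf]
      constructor
      · rintro (rfl|rfl)
        · exact ⟨Or.inr (Or.inl rfl), 3, by simp⟩
        · exact ⟨Or.inr (Or.inr rfl), 5, by simp⟩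
      · rintro ⟨(rfl|rfl|rfl), x, hx1, hx2⟩
        · exfalso; simp_all; omega
        · exact Or.inl rfl
        · exact Or.inr rfl
    have := hκ {{{0,1},{2,3}}, {{2,3},{4,5}}} (by
      rintro S (rfl|rfl)
      exacts [hAB, hBC])
      (⟨{2,3}, by rintro S (rfl|rfl) <;> simp⟩)
    have heq : ⋃₀ ({{{0,1},{2,3}}, {{2,3},{4,5}}} : Set (Set (Set (Fin 6)))) =
        ({{0, 1}, {2, 3}, {4, 5}} : Set (Set (Fin 6))) := by
      ext F; simp; tauto
    rwa [heq] at this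
  · rintro ⟨K, hK, -, h1, h2, h3⟩
    rcases hK with rfl|rfl|rfl
    · exact absurd h1.choose_spec.1 (by simp)
    · obtain ⟨x, hx1, hx2⟩ := h3
      simp_all; omega
    · obtain ⟨x, hx1, hx2⟩ := h1
      simp_all; omega
end
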